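/- arXiv:2502.09559 — 2 statements merged into one kernel-verified Lean document; each statement's English description precedes it below -/
import Mathlib

section
/- Let A be a graded ASL on a poset Π over a commutative ring B, and let Ω_1,...,Ω_n be straightening-closed poset ideals of Π with I_i = AΩ_i. For any u_1,...,u_n ∈ ℕ with u = max{u_1,...,u_n}, the ideal I_1^{u_1} ∩ ... ∩ I_n^{u_n} of A is generated by the set of standard monomials ξ_1ξ_2···ξ_u (ξ_1 ≤ ... ≤ ξ_u in Π) such that ξ_1,...,ξ_{u_i} ∈ Ω_i for each i. In particular, if A is a homogeneous ASL (each ξ ∈ Π has degree 1), then this intersection is generated in degree u. -/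
/-- Data of a graded algebra with straightening law (ASL) on a poset `P` over a
commutative ring `B`: an embedding of `P` into the `B`-algebra `A` such that the
standard monomials (products over weakly increasing chains in `P`) form a `B`-basis
of `A`, and for incomparable `α, β` every standard monomial appearing in the
straightening relation of `α * β` contains a factor `ζ` with `ζ ≤ α` and `ζ ≤ β`. -/
structure ASLData (P B A : Type*) [PartialOrder P] [CommRing B] [CommRing A]
    [Algebra B A] where
  emb : P → A
  basis : Module.Basis {l : List P // l.Pairwise (· ≤ ·)} B A
  basis_eq : ∀ l, basis l = (l.1.map emb).prod
  straighten : ∀ α β : P, ¬ α ≤ β → ¬ β ≤ α →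
    ∀ μ ∈ (basis.repr (emb α * emb β)).support, ∃ ζ ∈ μ.1, ζ ≤ α ∧ ζ ≤ β

/-- The number of factors of the (standard) monomial `l` lying in `Ω`. -/
noncomputable def countIn {P : Type*} (Ω : Set P) (l : List P) : ℕ :=
  l.countP fun z => @decide (z ∈ Ω) (Classical.propDecidable _)

/-!
Write `I = A Ω` and let `S w = stdSpan Ω w` be the `B`-span of the standard monomials with at
least `w` factors in `Ω`. As `Ω` is a poset ideal, these are the first `w` factors, so
`S w ⊆ I ^ w`. Once `I ^ w = S w`, the intersection is spanned by the standard monomials with at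
least `u i` factors in `Ω i` for every `i`, and each of them is a generator of length `U` times a
standard monomial.

For `I ^ w ⊆ S w` the point is `ω S w ⊆ S (w + 1)` for `ω ∈ Ω`, proved by well-founded induction
on `ω`. For a standard monomial `κ₀ κ'` with `ω ≰ κ₀`, straightening `ω κ₀` gives terms `a z` with
`a ∈ Ω`, `a < ω` and, when `κ₀ ∈ Ω`, `z ∈ I` by straightening-closedness. Then
`z κ' ∈ I S (w - 1) ⊆ S w`, and the induction hypothesis for `a` puts `a z κ'` into `S (w + 1)`.
-/

open Submodule

section countIn

variable {P : Type*} {Ω : Set P}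

lemma countIn_le_length (Ω : Set P) (l : List P) : countIn Ω l ≤ l.length :=
  List.countP_le_length

lemma countIn_cons_le (Ω : Set P) (a : P) (l : List P) :
    countIn Ω (a :: l) ≤ countIn Ω l + 1 := by
  unfold countIn
  rw [List.countP_cons]
  split <;> omega

lemma countIn_cons_of_mem {a : P} (ha : a ∈ Ω) (l : List P) :
    countIn Ω (a :: l) = countIn Ω l + 1 := by
  simp [countIn, ha]

lemma exists_mem_of_countIn_pos {l : List P} (h : 0 < countIn Ω l) : ∃ a ∈ l, a ∈ Ω := by
  simpa [countIn, List.countP_pos_iff] using h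

lemma le_countIn_of_forall_getElem {l : List P} {k : ℕ} (hk : k ≤ l.length)
    (h : ∀ j (hj : j < k), l[j] ∈ Ω) : k ≤ countIn Ω l := by
  have htake : countIn Ω (l.take k) = k := by
    rw [countIn, List.countP_eq_length.2, List.length_take, min_eq_left hk]
    intro a ha
    obtain ⟨j, hj, rfl⟩ := List.getElem_of_mem ha
    simpa [List.getElem_take] using h j (by simp at hj; omega)
  exact htake ▸ (List.take_sublist k l).countP_le

variable [Preorder P]

lemma getElem_mem_of_lt_countIn (hΩ : IsLowerSet Ω) {l : List P} (hl : l.Pairwise (· ≤ ·))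
    {j : ℕ} (hj : j < countIn Ω l) (hjl : j < l.length) : l[j] ∈ Ω := by
  induction l generalizing j with
  | nil => simp at hjl
  | cons a l ih =>
    cases j with
    | zero =>
      obtain ⟨b, hb, hbΩ⟩ := exists_mem_of_countIn_pos hj
      rcases List.mem_cons.1 hb with rfl | hb
      · exact hbΩ
      · exact hΩ (List.rel_of_pairwise_cons hl hb) hbΩ
    | succ j =>
      have := countIn_cons_le Ω a l
      exact ih hl.of_cons (by omega) _

lemma exists_cons_of_succ_le_countIn (hΩ : IsLowerSet Ω) {l : List P}
    (hl : l.Pairwise (· ≤ ·)) {w : ℕ} (hw : w + 1 ≤ countIn Ω l) :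
    ∃ c l', l = c :: l' ∧ c ∈ Ω ∧ w ≤ countIn Ω l' := by
  obtain _ | ⟨c, l'⟩ := l
  · simp [countIn] at hw
  · have hc : c ∈ Ω := getElem_mem_of_lt_countIn hΩ hl (j := 0) (by omega) (by simp)
    exact ⟨c, l', rfl, hc, by rw [countIn_cons_of_mem hc] at hw; omega⟩

end countIn

lemma list_prod_map_mem_span_of_countIn_pos {P A : Type*} [CommRing A] {Ω : Set P}
    (f : P → A) {l : List P} (h : 0 < countIn Ω l) :
    (l.map f).prod ∈ Ideal.span (f '' Ω) := by
  obtain ⟨a, ha, haΩ⟩ := exists_mem_of_countIn_pos h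
  obtain ⟨s, t, rfl⟩ := List.append_of_mem ha
  simp only [List.map_append, List.map_cons, List.prod_append, List.prod_cons]
  exact Ideal.mul_mem_left _ _ (Ideal.mul_mem_right _ _ (Ideal.subset_span ⟨a, haΩ, rfl⟩))

namespace ASLData

variable {P B A : Type*} [PartialOrder P] [CommRing B] [CommRing A] [Algebra B A]
  (D : ASLData P B A) (Ω : Set P)

def IsStraighteningClosed : Prop :=
  ∀ δ ∈ Ω, ∀ τ ∈ Ω, ¬ δ ≤ τ → ¬ τ ≤ δ →
    ∀ μ ∈ (D.basis.repr (D.emb δ * D.emb τ)).support, 2 ≤ countIn Ω μ.1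

def stdSpan (w : ℕ) : Submodule B A :=
  span B (D.basis '' {σ | w ≤ countIn Ω σ.1})

lemma basis_cons {a : P} {l : List P} (h : (a :: l).Pairwise (· ≤ ·)) :
    D.basis ⟨a :: l, h⟩ = D.emb a * D.basis ⟨l, h.of_cons⟩ := by
  simp [D.basis_eq]

lemma basis_eq_take_mul_drop (σ : {l : List P // l.Pairwise (· ≤ ·)}) (k : ℕ) :
    D.basis σ = ((σ.1.take k).map D.emb).prod * ((σ.1.drop k).map D.emb).prod := by
  rw [D.basis_eq, ← List.prod_append, ← List.map_append, List.take_append_drop]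

lemma mem_of_forall_basis_mem {N : Submodule B A} {x : A}
    (h : ∀ σ ∈ (D.basis.repr x).support, D.basis σ ∈ N) : x ∈ N :=
  span_le.2 (by rintro _ ⟨σ, hσ, rfl⟩; exact h σ hσ) (D.basis.mem_span_repr_support x)

variable {D Ω}

lemma mem_stdSpan_iff {w : ℕ} {x : A} :
    x ∈ D.stdSpan Ω w ↔ ∀ σ ∈ (D.basis.repr x).support, w ≤ countIn Ω σ.1 :=
  D.basis.mem_span_image

lemma basis_mem_stdSpan {w : ℕ} {σ : {l : List P // l.Pairwise (· ≤ ·)}}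
    (h : w ≤ countIn Ω σ.1) : D.basis σ ∈ D.stdSpan Ω w :=
  subset_span ⟨σ, h, rfl⟩

lemma stdSpan_zero : D.stdSpan Ω 0 = ⊤ :=
  eq_top_iff.2 fun _ _ => mem_stdSpan_iff.2 fun _ _ => Nat.zero_le _

lemma mul_mem_of_forall_basis {w : ℕ} {z : A} {N : Submodule B A}
    (h : ∀ σ, w ≤ countIn Ω σ.1 → z * D.basis σ ∈ N) {y : A}
    (hy : y ∈ D.stdSpan Ω w) : z * y ∈ N :=
  (span_le (p := N.comap (LinearMap.mulLeft B z)) |>.2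
    (by rintro _ ⟨σ, hσ, rfl⟩; exact h σ hσ)) hy

lemma stdSpan_le_restrictScalars_pow (hΩ : IsLowerSet Ω) (w : ℕ) :
    D.stdSpan Ω w ≤ (Ideal.span (D.emb '' Ω) ^ w).restrictScalars B := by
  induction w with
  | zero => simp [Ideal.one_eq_top]
  | succ w ih =>
    refine span_le.2 ?_
    rintro _ ⟨⟨l, hl⟩, hw, rfl⟩
    obtain ⟨c, l', rfl, hc, hl'⟩ := exists_cons_of_succ_le_countIn hΩ hl hw
    rw [D.basis_cons, pow_succ']
    exact Ideal.mul_mem_mul (Ideal.subset_span ⟨c, hc, rfl⟩) (ih (basis_mem_stdSpan hl'))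

lemma emb_mul_emb_mem_span (hΩ : IsLowerSet Ω) (hsc : D.IsStraighteningClosed Ω) {ω κ₀ : P}
    (hω : ω ∈ Ω) (hle : ¬ ω ≤ κ₀) :
    D.emb ω * D.emb κ₀ ∈ span B {x | ∃ a ∈ Ω, a < ω ∧ ∃ z,
      (κ₀ ∈ Ω → z ∈ Ideal.span (D.emb '' Ω)) ∧ x = D.emb a * z} := by
  by_cases hge : κ₀ ≤ ω
  · exact subset_span ⟨κ₀, hΩ hge hω, lt_of_le_not_ge hge hle, D.emb ω,
      fun _ => Ideal.subset_span ⟨ω, hω, rfl⟩, mul_comm _ _⟩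
  refine D.mem_of_forall_basis_mem fun ⟨ν, hν⟩ hsupp => subset_span ?_
  obtain ⟨ζ, hζ, hζω, hζκ₀⟩ := D.straighten ω κ₀ hle hge _ hsupp
  obtain _ | ⟨a, t⟩ := ν
  · simp at hζ
  have haζ : a ≤ ζ := by
    rcases List.mem_cons.1 hζ with rfl | hζ
    exacts [le_rfl, List.rel_of_pairwise_cons hν hζ]
  have haω : a < ω := lt_of_le_of_ne (haζ.trans hζω) fun h => hle (h ▸ haζ.trans hζκ₀)
  refine ⟨a, hΩ haω.le hω, haω, (t.map D.emb).prod, fun hκ₀ => ?_, by simp [D.basis_eq]⟩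
  have h2 : 2 ≤ countIn Ω (a :: t) := hsc ω hω κ₀ hκ₀ hle hge _ hsupp
  have := countIn_cons_le Ω a t
  exact list_prod_map_mem_span_of_countIn_pos D.emb (by omega)

lemma mul_mem_stdSpan_succ (hΩ : IsLowerSet Ω) {w : ℕ}
    (hstep : ∀ z ∈ Ideal.span (D.emb '' Ω), ∀ y ∈ D.stdSpan Ω w,
      z * y ∈ D.stdSpan Ω (w + 1))
    (z : A) {y : A} (hy : y ∈ D.stdSpan Ω (w + 1)) : z * y ∈ D.stdSpan Ω (w + 1) := by
  refine mul_mem_of_forall_basis (fun ⟨l, hl⟩ hw => ?_) hy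
  obtain ⟨c, l', rfl, hc, hl'⟩ := exists_cons_of_succ_le_countIn hΩ hl hw
  rw [D.basis_cons, ← mul_assoc]
  exact hstep _ (Ideal.mul_mem_left _ z (Ideal.subset_span ⟨c, hc, rfl⟩)) _
    (basis_mem_stdSpan hl')

lemma span_mul_mem_stdSpan_succ {w : ℕ}
    (hideal : ∀ (z : A), ∀ y ∈ D.stdSpan Ω w, z * y ∈ D.stdSpan Ω w)
    (hemb : ∀ ω ∈ Ω, ∀ y ∈ D.stdSpan Ω w, D.emb ω * y ∈ D.stdSpan Ω (w + 1))
    {z : A} (hz : z ∈ Ideal.span (D.emb '' Ω)) :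
    ∀ y ∈ D.stdSpan Ω w, z * y ∈ D.stdSpan Ω (w + 1) := by
  induction hz using Submodule.span_induction with
  | mem _ h => obtain ⟨ω, hω, rfl⟩ := h; exact hemb ω hω
  | zero => simp
  | add _ _ _ _ hx hz =>
    exact fun y hy => by rw [add_mul]; exact add_mem (hx y hy) (hz y hy)
  | smul a x _ hx =>
    exact fun y hy => by rw [smul_eq_mul, mul_comm a, mul_assoc]; exact hx _ (hideal a y hy)

variable [WellFoundedLT P]

-- For `w = 0` the hypothesis `hprev` is automatic: `0 - 1 = 0` and `stdSpan Ω 0 = ⊤`.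
lemma emb_mul_mem_stdSpan_succ (hΩ : IsLowerSet Ω) (hsc : D.IsStraighteningClosed Ω) {w : ℕ}
    (hprev : ∀ z ∈ Ideal.span (D.emb '' Ω), ∀ y ∈ D.stdSpan Ω (w - 1),
      z * y ∈ D.stdSpan Ω w)
    (ω : P) : ω ∈ Ω → ∀ y ∈ D.stdSpan Ω w, D.emb ω * y ∈ D.stdSpan Ω (w + 1) := by
  induction ω using WellFoundedLT.induction with
  | _ ω ih =>
    intro hω y hy
    refine mul_mem_of_forall_basis ?_ hy
    rintro ⟨_ | ⟨κ₀, κ'⟩, hκ⟩ hw <;> simp only at hw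
    · have hsorted : [ω].Pairwise (· ≤ ·) := List.pairwise_singleton _ _
      rw [show D.emb ω * D.basis ⟨[], hκ⟩ = D.basis ⟨[ω], hsorted⟩ by simp [D.basis_eq]]
      exact basis_mem_stdSpan (by rw [countIn_cons_of_mem hω]; simp [countIn] at hw; omega)
    by_cases hle : ω ≤ κ₀
    · rw [← D.basis_cons (hκ.cons_cons_of_trans hle)]
      exact basis_mem_stdSpan (by rw [countIn_cons_of_mem hω]; omega)
    have hκ' : D.basis ⟨κ', hκ.of_cons⟩ ∈ D.stdSpan Ω (w - 1) := basis_mem_stdSpan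
      (show w - 1 ≤ countIn Ω κ' by have := countIn_cons_le Ω κ₀ κ'; omega)
    rw [D.basis_cons, ← mul_assoc]
    refine (span_le (p := (D.stdSpan Ω (w + 1)).comap (LinearMap.mulRight B _)) |>.2 ?_)
      (emb_mul_emb_mem_span hΩ hsc hω hle)
    rintro _ ⟨a, ha, haω, z, hz, rfl⟩
    simp only [SetLike.mem_coe, mem_comap, LinearMap.mulRight_apply, mul_assoc]
    refine ih a haω ha _ ?_
    rcases Nat.eq_zero_or_pos w with rfl | hw0
    · simp [stdSpan_zero]
    · have hκ₀ : κ₀ ∈ Ω := getElem_mem_of_lt_countIn hΩ hκ (j := 0) (by omega) (by simp)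
      exact hprev z (hz hκ₀) _ hκ'

lemma mul_mem_stdSpan_and_span_mul_mem_succ (hΩ : IsLowerSet Ω) (hsc : D.IsStraighteningClosed Ω) (w : ℕ) :
    (∀ (z : A), ∀ y ∈ D.stdSpan Ω w, z * y ∈ D.stdSpan Ω w) ∧
      ∀ z ∈ Ideal.span (D.emb '' Ω), ∀ y ∈ D.stdSpan Ω w,
        z * y ∈ D.stdSpan Ω (w + 1) := by
  induction w with
  | zero =>
    have hideal : ∀ (z : A), ∀ y ∈ D.stdSpan Ω 0, z * y ∈ D.stdSpan Ω 0 := by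
      simp [stdSpan_zero]
    exact ⟨hideal, fun z hz => span_mul_mem_stdSpan_succ hideal
      (emb_mul_mem_stdSpan_succ hΩ hsc (by simp [stdSpan_zero])) hz⟩
  | succ w ih =>
    have hideal := mul_mem_stdSpan_succ hΩ ih.2
    exact ⟨hideal, fun z hz => span_mul_mem_stdSpan_succ hideal
      (emb_mul_mem_stdSpan_succ hΩ hsc ih.2) hz⟩

lemma restrictScalars_pow_le_stdSpan (hΩ : IsLowerSet Ω) (hsc : D.IsStraighteningClosed Ω)
    (w : ℕ) : (Ideal.span (D.emb '' Ω) ^ w).restrictScalars B ≤ D.stdSpan Ω w := by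
  induction w with
  | zero => simp [stdSpan_zero]
  | succ w ih =>
    intro x hx
    rw [restrictScalars_mem, pow_succ'] at hx
    refine Submodule.mul_induction_on hx (fun z hz y hy => ?_) (fun _ _ => add_mem)
    exact (mul_mem_stdSpan_and_span_mul_mem_succ hΩ hsc w).2 z hz y (ih hy)

lemma mem_span_pow_iff_mem_stdSpan (hΩ : IsLowerSet Ω) (hsc : D.IsStraighteningClosed Ω)
    {w : ℕ} {x : A} : x ∈ Ideal.span (D.emb '' Ω) ^ w ↔ x ∈ D.stdSpan Ω w :=
  ⟨fun hx => restrictScalars_pow_le_stdSpan hΩ hsc w ((restrictScalars_mem B _ x).2 hx),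
    fun hx => (restrictScalars_mem B _ x).1 (stdSpan_le_restrictScalars_pow hΩ w hx)⟩

end ASLData

theorem stmt_13_general {P B A : Type*} [PartialOrder P] [Fintype P] [CommRing B] [CommRing A]
    [Algebra B A] (D : ASLData P B A) (m : ℕ) (Ω : Fin m → Set P)
    -- each Ω i is a poset ideal
    (hideal : ∀ i, ∀ x ∈ Ω i, ∀ y, y ≤ x → y ∈ Ω i)
    -- each Ω i is straightening-closed
    (hsc : ∀ i, ∀ δ ∈ Ω i, ∀ τ ∈ Ω i, ¬ δ ≤ τ → ¬ τ ≤ δ →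
      ∀ μ ∈ (D.basis.repr (D.emb δ * D.emb τ)).support, 2 ≤ countIn (Ω i) μ.1)
    (u : Fin m → ℕ) (U : ℕ) (hU : IsGreatest (Set.range u) U) :
    (⨅ i, (Ideal.span (D.emb '' Ω i)) ^ (u i)) =
      Ideal.span {x : A | ∃ l : List P, l.Pairwise (· ≤ ·) ∧ l.length = U ∧
        (∀ i : Fin m, ∀ j, j < u i → ∀ (h : j < l.length), l.get ⟨j, h⟩ ∈ Ω i) ∧
        x = (l.map D.emb).prod} := by
  have hΩ : ∀ i, IsLowerSet (Ω i) := fun i _ _ hba ha => hideal i _ ha _ hba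
  have hpow : ∀ i x, x ∈ Ideal.span (D.emb '' Ω i) ^ u i ↔ x ∈ D.stdSpan (Ω i) (u i) :=
    fun i _ => D.mem_span_pow_iff_mem_stdSpan (hΩ i) (hsc i)
  apply le_antisymm
  · intro x hx
    refine (restrictScalars_mem B _ x).1 (D.mem_of_forall_basis_mem fun σ hσ => ?_)
    have hcount : ∀ i, u i ≤ countIn (Ω i) σ.1 := fun i =>
      ASLData.mem_stdSpan_iff.1 ((hpow i x).1 ((mem_iInf _).1 hx i)) σ hσ
    obtain ⟨i₀, hi₀⟩ := hU.1
    have hUlen : U ≤ σ.1.length := hi₀ ▸ (hcount i₀).trans (countIn_le_length _ _)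
    rw [restrictScalars_mem B, D.basis_eq_take_mul_drop σ U]
    refine Ideal.mul_mem_right _ _ (Ideal.subset_span ⟨σ.1.take U,
      σ.2.sublist (List.take_sublist _ _), by simp [hUlen], fun i j hj h => ?_, rfl⟩)
    simpa [List.getElem_take] using
      getElem_mem_of_lt_countIn (hΩ i) σ.2 (hj.trans_le (hcount i)) (by simp at h; omega)
  · refine Ideal.span_le.2 ?_
    rintro _ ⟨l, hl, hlen, hpre, rfl⟩
    refine (mem_iInf _).2 fun i => (hpow i _).2 ?_
    rw [← D.basis_eq ⟨l, hl⟩]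
    exact ASLData.basis_mem_stdSpan (le_countIn_of_forall_getElem (hlen ▸ hU.2 ⟨i, rfl⟩)
      fun j hj => hpre i j hj _)

/-- For straightening-closed poset ideals `Ω_1,...,Ω_m` of `P` with `I_i = AΩ_i` and
`u_1,...,u_m ∈ ℕ` with `U = max u_i`, the ideal `I_1^{u_1} ∩ ... ∩ I_m^{u_m}` is generated
by the standard monomials `ξ_1 ξ_2 ⋯ ξ_U` (`ξ_1 ≤ ... ≤ ξ_U`) with `ξ_1,...,ξ_{u_i} ∈ Ω_i`
for each `i`. (These generators all have length `U`, so for a homogeneous ASL the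
intersection is generated in degree `U`.) -/
theorem stmt_13 {P B A : Type*} [PartialOrder P] [Fintype P] [CommRing B] [CommRing A]
    [Algebra B A] (D : ASLData P B A) (m : ℕ) (hm : 0 < m) (Ω : Fin m → Set P)
    -- each Ω i is a poset ideal
    (hideal : ∀ i, ∀ x ∈ Ω i, ∀ y, y ≤ x → y ∈ Ω i)
    -- each Ω i is straightening-closed
    (hsc : ∀ i, ∀ δ ∈ Ω i, ∀ τ ∈ Ω i, ¬ δ ≤ τ → ¬ τ ≤ δ →
      ∀ μ ∈ (D.basis.repr (D.emb δ * D.emb τ)).support, 2 ≤ countIn (Ω i) μ.1)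
    (u : Fin m → ℕ) (U : ℕ) (hU : IsGreatest (Set.range u) U) :
    (⨅ i, (Ideal.span (D.emb '' Ω i)) ^ (u i)) =
      Ideal.span {x : A | ∃ l : List P, l.Pairwise (· ≤ ·) ∧ l.length = U ∧
        (∀ i : Fin m, ∀ j, j < u i → ∀ (h : j < l.length), l.get ⟨j, h⟩ ∈ Ω i) ∧
        x = (l.map D.emb).prod} :=
  stmt_13_general D m Ω hideal hsc u U hU
end

section
/- Let γ = [a_1,...,a_d] with 1 ≤ a_1 < ... < a_d ≤ n and γ ≠ [n-d+1,...,n]. The length m of the principal chain of the distributive lattice Γ(γ) = {δ ≥ γ} (formed by repeatedly joining all covers, starting at γ and ending at [n-d+1,...,n]) equals max{Σ_{j=0}^{i}|β_j| + Σ_{j=i}^{t}|χ_j| : 0 ≤ i ≤ t}, where [β_0,...,β_s] is the block decomposition of γ into maximal runs of consecutive integers, χ_0,...,χ_t are the gaps, and t = s if a_d < n, t = s-1 if a_d = n. -/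
/-!
An entry `x j` of `x ∈ Γ` can be raised by one exactly when `x j + 1` is at most `n` and not
another entry. The covers of `x` are these single raises, so each step of the principal chain
raises every raisable entry at once. Along the chain the quantity
`Φ x = max {(n - d + 1 + j) - x j + j : x j < n - d + 1 + j}` drops by exactly one per step: an
entry blocked by the entry `x j + 1` contributes less than the blocking entry. Hence
`m - 1 = Φ γ`. Along a block of `γ` the term `(n - d + 1 + j) - a j + j` grows with `j`, so the
maximum is attained at block ends, where telescoping the block and gap sizes identifies it
with `κ_i - 1`.
-/

/-- The set of strictly increasing `d`-tuples with entries in `{1,...,n}`,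
ordered componentwise (as a subtype of `Fin d → ℕ`). -/
abbrev GammaSet (n d : ℕ) := {a : Fin d → ℕ // StrictMono a ∧ ∀ i, 1 ≤ a i ∧ a i ≤ n}

open Finset

namespace GammaSet

variable {n d : ℕ}

def top (n d j : ℕ) : ℕ := n - d + 1 + j

lemma add_sub_le_of_strictMono {f : Fin d → ℕ} (hf : StrictMono f) {i j : Fin d} (hij : i ≤ j) :
    f i + (j - i : ℕ) ≤ f j := by
  obtain ⟨i, hi⟩ := i
  obtain ⟨j, hj⟩ := j
  rw [Fin.mk_le_mk] at hij
  induction j, hij using Nat.le_induction with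
  | base => simp
  | succ j hij ih =>
    have hlt := hf (show (⟨j, by omega⟩ : Fin d) < ⟨j + 1, hj⟩ from Fin.mk_lt_mk.2 (by omega))
    have := ih (by omega)
    simp only at hlt this ⊢
    omega

lemma le_top (x : GammaSet n d) (j : Fin d) : x.1 j ≤ top n d j := by
  have hj := j.2
  have hlast := add_sub_le_of_strictMono x.2.1 (show j ≤ ⟨d - 1, by omega⟩ from
    Fin.mk_le_mk.2 (by omega))
  have := (x.2.2 ⟨d - 1, by omega⟩).2
  simp only [top] at hlast ⊢
  omega

lemma exists_lt_top_of_ne (x : GammaSet n d) (hx : x.1 ≠ fun j : Fin d => top n d j) :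
    ∃ j, x.1 j < top n d j := by
  by_contra! h
  exact hx (funext fun j => le_antisymm (x.le_top j) (h j))

/-- Entry `j` of `x` can be raised by one without leaving `Γ`. -/
def CanRaise (x : GammaSet n d) (j : Fin d) : Prop := x.1 j < n ∧ ∀ i, x.1 i ≠ x.1 j + 1

instance (x : GammaSet n d) : DecidablePred x.CanRaise :=
  fun _ => inferInstanceAs (Decidable (_ ∧ _))

lemma CanRaise.add_one_lt {x : GammaSet n d} {j i : Fin d} (h : x.CanRaise j) (hji : j < i) :
    x.1 j + 1 < x.1 i :=
  lt_of_le_of_ne (x.2.1 hji) (h.2 i).symm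

def raise (x : GammaSet n d) (j : Fin d) (h : x.CanRaise j) : GammaSet n d :=
  ⟨Function.update x.1 j (x.1 j + 1), by
    refine ⟨fun i i' hii' => ?_, fun i => ?_⟩
    · have hlt := x.2.1 hii'
      simp only [Function.update_apply]
      split_ifs with hi hi' hi'
      · exact absurd (hi.trans hi'.symm) hii'.ne
      · subst hi; exact h.add_one_lt hii'
      · subst hi'; omega
      · exact hlt
    · rcases eq_or_ne i j with rfl | hi
      · simp [h.1]
      · simpa [hi] using x.2.2 i⟩

section Raise

variable {x y : GammaSet n d} {j : Fin d}

lemma le_iff : x ≤ y ↔ ∀ j, x.1 j ≤ y.1 j := Iff.rfl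

@[simp]
lemma raise_apply_self (h : x.CanRaise j) : (x.raise j h).1 j = x.1 j + 1 :=
  Function.update_self ..

lemma raise_apply_of_ne (h : x.CanRaise j) {i : Fin d} (hi : i ≠ j) :
    (x.raise j h).1 i = x.1 i :=
  Function.update_of_ne hi ..

lemma le_raise (h : x.CanRaise j) : x ≤ x.raise j h := fun i => by
  rcases eq_or_ne i j with rfl | hi
  · simp
  · rw [raise_apply_of_ne h hi]

lemma lt_raise (h : x.CanRaise j) : x < x.raise j h :=
  (le_raise h).lt_of_ne fun he => by simpa using congr_fun (congrArg Subtype.val he) j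

/-- Below any `y > x` lies a single raise of `x`: raise the last entry where `x` and `y`
differ. -/
lemma exists_raise_le_of_lt (hxy : x < y) : ∃ j, ∃ h : x.CanRaise j, x.raise j h ≤ y := by
  have hne : (univ.filter fun i => x.1 i < y.1 i).Nonempty := by
    obtain ⟨i, hi⟩ : ∃ i, x.1 i < y.1 i := by
      by_contra! h
      exact hxy.ne (Subtype.ext (funext fun i => le_antisymm (hxy.le i) (h i)))
    exact ⟨i, by simpa using hi⟩
  set j := (univ.filter fun i => x.1 i < y.1 i).max' hne
  have hj : x.1 j < y.1 j := (mem_filter.1 (max'_mem _ hne)).2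
  have hafter : ∀ i, j < i → x.1 i = y.1 i := fun i hji =>
    le_antisymm (hxy.le i) (not_lt.1 fun hi => hji.not_ge (le_max' _ i (by simpa using hi)))
  have hcan : x.CanRaise j := by
    refine ⟨hj.trans_le (y.2.2 j).2, fun i hi => ?_⟩
    rcases le_or_gt i j with hij | hji
    · exact absurd (x.2.1.monotone hij) (by omega)
    · exact absurd (hafter i hji ▸ y.2.1 hji) (by omega)
  refine ⟨j, hcan, fun i => ?_⟩
  rcases eq_or_ne i j with rfl | hi
  · simpa using hj
  · rw [raise_apply_of_ne hcan hi]; exact hxy.le i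

lemma covBy_raise (h : x.CanRaise j) : x ⋖ x.raise j h := by
  refine ⟨lt_raise h, fun z hxz hzr => ?_⟩
  obtain ⟨i, hi, hiz⟩ := exists_raise_le_of_lt hxz
  obtain rfl : i = j := by
    by_contra hij
    have := le_iff.1 (hiz.trans hzr.le) i
    rw [raise_apply_self, raise_apply_of_ne h hij] at this
    omega
  exact (hiz.trans_lt hzr).ne rfl

lemma exists_eq_raise_of_covBy (hxy : x ⋖ y) : ∃ j, ∃ h : x.CanRaise j, y = x.raise j h := by
  obtain ⟨j, h, hle⟩ := exists_raise_le_of_lt hxy.lt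
  exact ⟨j, h, (hle.eq_or_lt.resolve_right fun hlt => hxy.2 (lt_raise h) hlt).symm⟩

end Raise

lemma ite_canRaise_lt (x : GammaSet n d) {i j : Fin d} (hij : i < j) :
    (if x.CanRaise i then x.1 i + 1 else x.1 i) < x.1 j := by
  split_ifs with h
  · exact h.add_one_lt hij
  · exact x.2.1 hij

/-- The join of all covers of `x`: every entry that can be raised is raised. -/
def next (x : GammaSet n d) : GammaSet n d :=
  ⟨fun j => if x.CanRaise j then x.1 j + 1 else x.1 j, by
    refine ⟨fun i j hij => (x.ite_canRaise_lt hij).trans_le ?_, fun j => ?_⟩ <;> dsimp only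
    · split_ifs <;> omega
    · have := x.2.2 j
      split_ifs with h
      · exact ⟨by omega, h.1⟩
      · exact this⟩

lemma next_apply (x : GammaSet n d) (j : Fin d) :
    x.next.1 j = if x.CanRaise j then x.1 j + 1 else x.1 j := rfl

lemma next_apply_lt (x : GammaSet n d) {i j : Fin d} (hij : i < j) : x.next.1 i < x.1 j :=
  x.ite_canRaise_lt hij

lemma next_apply_le (x : GammaSet n d) (j : Fin d) : x.next.1 j ≤ x.1 j + 1 := by
  rw [next_apply]; split_ifs <;> omega

lemma isLUB_next {x : GammaSet n d} (hx : ¬ IsMax x) : IsLUB {y | x ⋖ y} x.next := by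
  refine ⟨fun y hy => ?_, fun u hu => ?_⟩
  · obtain ⟨j, h, rfl⟩ := exists_eq_raise_of_covBy hy
    refine le_iff.2 fun i => ?_
    rw [next_apply]
    rcases eq_or_ne i j with rfl | hi
    · simp [h]
    · rw [raise_apply_of_ne h hi]; split_ifs <;> omega
  · obtain ⟨y, hxy⟩ := not_isMax_iff.1 hx
    obtain ⟨j₀, h₀, -⟩ := exists_raise_le_of_lt hxy
    have hxu : x ≤ u := (le_raise h₀).trans (hu (covBy_raise h₀))
    intro j
    rw [next_apply]
    split_ifs with h
    · simpa using hu (covBy_raise h) j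
    · exact hxu j

/-- The length of the principal chain from `x` to the top. -/
def potential (x : GammaSet n d) : ℕ :=
  (univ.filter fun j : Fin d => x.1 j < top n d j).sup fun j => top n d j - x.1 j + j

lemma le_potential (x : GammaSet n d) {j : Fin d} (hj : x.1 j < top n d j) :
    top n d j - x.1 j + j ≤ x.potential :=
  le_sup (f := fun j : Fin d => top n d j - x.1 j + j) (by simpa using hj)

lemma exists_potential_eq (x : GammaSet n d) (hx : ∃ j, x.1 j < top n d j) :
    ∃ j, x.1 j < top n d j ∧ x.potential = top n d j - x.1 j + j := by
  obtain ⟨j₀, hj₀⟩ := hx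
  obtain ⟨j, hj, hjeq⟩ := exists_mem_eq_sup (univ.filter fun j : Fin d => x.1 j < top n d j)
    ⟨j₀, by simpa using hj₀⟩ fun j : Fin d => top n d j - x.1 j + j
  exact ⟨j, by simpa using hj, hjeq⟩

lemma potential_eq_zero (x : GammaSet n d) (hx : x.1 = fun j : Fin d => top n d j) :
    x.potential = 0 :=
  Nat.eq_zero_of_le_zero <| Finset.sup_le fun j hj => absurd (mem_filter.1 hj).2 (by simp [hx])

lemma potential_le_next_add_one (x : GammaSet n d) : x.potential ≤ x.next.potential + 1 := by
  refine Finset.sup_le fun j hj => ?_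
  have hj : x.1 j < top n d j := (mem_filter.1 hj).2
  have hnext := x.next_apply_le j
  rcases lt_or_ge (x.next.1 j) (top n d j) with hlt | hge
  · have := x.next.le_potential hlt
    omega
  · have hle := x.next.le_top j
    rcases Nat.eq_zero_or_pos (j : ℕ) with h0 | hpos
    · omega
    · -- entry `j` reaches its top in one step, and the entry before it stays below its own top
      have hi := x.next_apply_lt (show (⟨j - 1, by omega⟩ : Fin d) < j from
        Fin.lt_def.2 (by simp only; omega))
      have := x.next.le_potential (j := ⟨j - 1, by omega⟩) (by simp only [top] at *; omega)
      simp only [top] at *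
      omega

lemma next_potential_add_one_le (hdn : d ≤ n) (x : GammaSet n d)
    (hx : ∃ j, x.1 j < top n d j) : x.next.potential + 1 ≤ x.potential := by
  obtain ⟨j₀, hj₀⟩ := hx
  have hpos := x.le_potential hj₀
  suffices x.next.potential ≤ x.potential - 1 by omega
  refine Finset.sup_le fun j hj => ?_
  have hj : x.next.1 j < top n d j := (mem_filter.1 hj).2
  rw [next_apply] at hj ⊢
  split_ifs at hj ⊢ with h
  · have := x.le_potential (j := j) (by omega)
    omega
  · -- `j` is blocked by an entry `x i = x j + 1`, which is further below its top
    obtain ⟨i, hi⟩ : ∃ i, x.1 i = x.1 j + 1 := by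
      have : x.1 j < n := by have := j.2; simp only [top] at hj; omega
      simpa [CanRaise, this] using h
    have hji : j < i := lt_of_not_ge fun hij => by have := x.2.1.monotone hij; omega
    have hji' : (j : ℕ) < i := hji
    have := x.le_potential (j := i) (by simp only [top] at hj ⊢; omega)
    simp only [top] at hj this ⊢
    omega

lemma potential_next_add_one (hdn : d ≤ n) (x : GammaSet n d) (hx : ∃ j, x.1 j < top n d j) :
    x.next.potential + 1 = x.potential :=
  le_antisymm (next_potential_add_one_le hdn x hx) (potential_le_next_add_one x)

lemma potential_eq_of_principalChain (hdn : d ≤ n) (ξ : ℕ → GammaSet n d) (m : ℕ)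
    (htop : (ξ m).1 = fun j : Fin d => top n d j)
    (hmid : ∀ i < m, (ξ i).1 ≠ fun j : Fin d => top n d j)
    (hstep : ∀ i < m, IsLUB {y | ξ i ⋖ y} (ξ (i + 1))) : (ξ 0).potential = m := by
  have hdrop : ∀ i ≤ m, (ξ i).potential + i = (ξ 0).potential := by
    intro i hi
    induction i with
    | zero => rfl
    | succ i ih =>
      have hi' : i < m := by omega
      have hlt : ξ i < ξ m := lt_of_le_of_ne (le_iff.2 fun j => htop ▸ (ξ i).le_top j)
        fun h => hmid i hi' (h ▸ htop)
      rw [(hstep i hi').unique (isLUB_next (not_isMax_iff.2 ⟨_, hlt⟩)), ← ih (by omega),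
        ← potential_next_add_one hdn _ ((ξ i).exists_lt_top_of_ne (hmid i hi'))]
      omega
  simpa [potential_eq_zero _ htop] using (hdrop m le_rfl).symm

end GammaSet

open GammaSet

/-- `k i` is the first index of the block `β_i` of `a`, a maximal run of consecutive integers. -/
structure IsBlockDecomposition (a k : ℕ → ℕ) (s d : ℕ) : Prop where
  zero : k 0 = 0
  last : k (s + 1) = d
  lt_succ : ∀ i ≤ s, k i < k (i + 1)
  consecutive : ∀ i ≤ s, ∀ j, k i ≤ j → j + 1 < k (i + 1) → a (j + 1) = a j + 1
  gap : ∀ i < s, a (k (i + 1) - 1) + 1 < a (k (i + 1))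

namespace IsBlockDecomposition

variable {a k : ℕ → ℕ} {n s t d : ℕ}

lemma strictMonoOn (hB : IsBlockDecomposition a k s d) : StrictMonoOn k (Set.Iic (s + 1)) :=
  strictMonoOn_Iic_of_lt_succ fun i hi => by simpa using hB.lt_succ i (by omega)

lemma apply_le (hB : IsBlockDecomposition a k s d) {i : ℕ} (hi : i ≤ s + 1) : k i ≤ d :=
  hB.last ▸ hB.strictMonoOn.monotoneOn hi Set.self_mem_Iic hi

lemma apply_lt (hB : IsBlockDecomposition a k s d) {i : ℕ} (hi : i ≤ s) : k i < d :=
  hB.last ▸ hB.strictMonoOn (show i ≤ s + 1 by omega) Set.self_mem_Iic (by omega)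

lemma exists_mem_block (hB : IsBlockDecomposition a k s d) {j : ℕ} (hj : j < d) :
    ∃ i ≤ s, k i ≤ j ∧ j < k (i + 1) := by
  have hex : ∃ i, j < k (i + 1) := ⟨s, hB.last ▸ hj⟩
  refine ⟨Nat.find hex, Nat.find_min' hex (hB.last ▸ hj), ?_, Nat.find_spec hex⟩
  by_cases h0 : Nat.find hex = 0
  · rw [h0, hB.zero]; omega
  · have := Nat.find_min hex (Nat.sub_one_lt h0)
    rwa [Nat.sub_one_add_one h0, not_lt] at this

lemma apply_eq_add_sub (hB : IsBlockDecomposition a k s d) {i j : ℕ} (hi : i ≤ s)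
    (hij : k i ≤ j) (hj : j < k (i + 1)) : a j = a (k i) + (j - k i) := by
  induction j, hij using Nat.le_induction with
  | base => simp
  | succ j hij ih =>
    rw [hB.consecutive i hi j hij hj, ih (by omega)]
    omega

lemma blockEnd_lt_top (hB : IsBlockDecomposition a k s d) (hle : ∀ j < d, a j ≤ top n d j)
    (ht : (a (d - 1) < n ∧ t = s) ∨ (a (d - 1) = n ∧ 1 ≤ s ∧ t = s - 1)) {i : ℕ} (hi : i ≤ t) :
    k (i + 1) - 1 < d ∧ a (k (i + 1) - 1) < top n d (k (i + 1) - 1) := by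
  have hk := hB.lt_succ i (by omega)
  have hkd := hB.apply_le (i := i + 1) (by omega)
  refine ⟨by omega, ?_⟩
  rcases lt_or_eq_of_le (show i ≤ s by omega) with his | rfl
  · have := hB.gap i his
    have := hle _ (hB.apply_lt (i := i + 1) his)
    simp only [top] at *
    omega
  · rw [hB.last]
    simp only [top]
    omega

lemma exists_blockEnd (hB : IsBlockDecomposition a k s d) (hdn : d ≤ n)
    (ht : (a (d - 1) < n ∧ t = s) ∨ (a (d - 1) = n ∧ 1 ≤ s ∧ t = s - 1)) {j : ℕ} (hj : j < d)
    (hjt : a j < top n d j) :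
    ∃ i ≤ t, j ≤ k (i + 1) - 1 ∧ a (k (i + 1) - 1) = a j + (k (i + 1) - 1 - j) := by
  obtain ⟨i, his, hij, hji⟩ := hB.exists_mem_block hj
  have hj' := hB.apply_eq_add_sub his hij hji
  have hend := hB.apply_eq_add_sub (j := k (i + 1) - 1) his (by omega) (by omega)
  refine ⟨i, ?_, by omega, by omega⟩
  rcases ht with ⟨-, rfl⟩ | ⟨hn, -, rfl⟩
  · exact his
  · -- the last block ends at `n`, so it lies at the top
    by_contra hit
    obtain rfl : i = s := by omega
    rw [hB.last] at hend
    simp only [top] at hjt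
    omega

lemma sum_Icc_gaps (hB : IsBlockDecomposition a k s d)
    (ht : (a (d - 1) < n ∧ t = s) ∨ (a (d - 1) = n ∧ 1 ≤ s ∧ t = s - 1)) {χ : ℕ → ℤ}
    (hχ : ∀ i < s, χ i = (a (k (i + 1)) : ℤ) - (a (k (i + 1) - 1) : ℤ) - 1)
    (hχs : χ s = (n : ℤ) - (a (d - 1) : ℤ)) {i : ℕ} (hi : i ≤ t) :
    ∑ j ∈ Icc i t, χ j = (n : ℤ) - d - (a (k (i + 1) - 1) - k (i + 1)) := by
  have hts : t ≤ s := by omega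
  -- `G j` is the last entry of block `j` minus the number of entries up to it; beyond the last
  -- block `G` continues as if a block started at `n + 1`, so that `χ j = G (j + 1) - G j`
  set G : ℕ → ℤ := fun j => if j ≤ s then (a (k (j + 1) - 1) : ℤ) - k (j + 1) else n - d
  have hGs : G s = a (d - 1) - d := by simp [G, hB.last]
  have htel : ∀ j ∈ Icc i t, χ j = G (j + 1) - G j := by
    intro j hj
    have hjs : j ≤ s := by have := (mem_Icc.1 hj).2; omega
    rcases lt_or_eq_of_le hjs with hjs | rfl
    · have hk := hB.lt_succ (j + 1) (by omega)
      have hend := hB.apply_eq_add_sub (i := j + 1) (j := k (j + 1 + 1) - 1) (by omega)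
        (by omega) (by omega)
      have := hB.lt_succ j (by omega)
      simp only [G, if_pos (show j + 1 ≤ s by omega), if_pos (show j ≤ s by omega), hχ j hjs,
        hend]
      push_cast
      omega
    · simp only [G] at hGs ⊢
      rw [if_neg (by omega), hGs, hχs]
      ring
  rw [sum_congr rfl htel, sum_Icc_sub hi]
  have hGt : G (t + 1) = n - d := by
    rcases ht with ⟨-, rfl⟩ | ⟨hn, hs, rfl⟩
    · simp [G]
    · rw [Nat.sub_one_add_one (by omega), hGs, hn]
  simp only [hGt, G, if_pos (hi.trans hts)]

lemma kappa_eq (hB : IsBlockDecomposition a k s d)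
    (ht : (a (d - 1) < n ∧ t = s) ∨ (a (d - 1) = n ∧ 1 ≤ s ∧ t = s - 1)) {χ β κ : ℕ → ℤ}
    (hχ : ∀ i < s, χ i = (a (k (i + 1)) : ℤ) - (a (k (i + 1) - 1) : ℤ) - 1)
    (hχs : χ s = (n : ℤ) - (a (d - 1) : ℤ)) (hβ : ∀ i, β i = (k (i + 1) : ℤ) - (k i : ℤ))
    (hκ : ∀ i, κ i = (∑ j ∈ Finset.Icc 0 i, β j) + ∑ j ∈ Finset.Icc i t, χ j)
    {i : ℕ} (hi : i ≤ t) :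
    κ i = (n : ℤ) - d + 2 * k (i + 1) - a (k (i + 1) - 1) := by
  rw [hκ, sum_congr rfl fun j _ => hβ j, sum_Icc_sub (Nat.zero_le i) (fun j => (k j : ℤ)),
    hB.sum_Icc_gaps ht hχ hχs hi, hB.zero]
  push_cast
  ring

/-- The potential of `γ` is attained at the last entry of a block: along a block `a j` and
`top j` grow in step, so `(top j - a j) + j` grows with `j`. -/
lemma potential_add_one_eq_sup' (hB : IsBlockDecomposition a k s d) (hdn : d ≤ n)
    {γ : GammaSet n d} (hγa : ∀ j : Fin d, γ.1 j = a j)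
    (ht : (a (d - 1) < n ∧ t = s) ∨ (a (d - 1) = n ∧ 1 ≤ s ∧ t = s - 1))
    (hne : ∃ j < d, a j ≠ top n d j) :
    (γ.potential : ℤ) + 1 = (Icc 0 t).sup' (nonempty_Icc.mpr (Nat.zero_le t))
      fun i => (n : ℤ) - d + 2 * k (i + 1) - a (k (i + 1) - 1) := by
  have hle : ∀ j < d, a j ≤ top n d j := fun j hj => hγa ⟨j, hj⟩ ▸ γ.le_top ⟨j, hj⟩
  apply le_antisymm
  · obtain ⟨j₀, hj₀d, hj₀⟩ := hne
    obtain ⟨j, hj, hpot⟩ := γ.exists_potential_eq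
      ⟨⟨j₀, hj₀d⟩, by rw [hγa]; exact lt_of_le_of_ne (hle j₀ hj₀d) hj₀⟩
    rw [hγa] at hj hpot
    obtain ⟨i, hit, hji, hend⟩ := hB.exists_blockEnd hdn ht j.2 hj
    refine le_trans ?_ (le_sup' _ (mem_Icc.2 ⟨Nat.zero_le i, hit⟩))
    have := hB.lt_succ i (by rcases ht with ⟨-, rfl⟩ | ⟨-, -, rfl⟩ <;> omega)
    simp only [top] at hj hpot ⊢
    omega
  · refine sup'_le _ _ fun i hi => ?_
    obtain ⟨hed, hetop⟩ := hB.blockEnd_lt_top hle ht (mem_Icc.1 hi).2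
    have := γ.le_potential (j := ⟨_, hed⟩) (by rwa [hγa])
    rw [hγa] at this
    simp only [top] at hetop this
    omega

end IsBlockDecomposition

theorem stmt_17_general (n d s t : ℕ) (hdn : d ≤ n)
    -- γ is the strictly increasing tuple `a 0 < a 1 < ... < a (d-1)` (0-based indexing)
    (a : ℕ → ℕ)
    -- γ ≠ [n-d+1,...,n]
    (hne : ∃ j < d, a j ≠ n - d + 1 + j)
    -- block decomposition: block `i` (0 ≤ i ≤ s) occupies the 0-based indices
    -- `k i, k i + 1, ..., k (i+1) - 1`; its entries are consecutive integers, and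
    -- consecutive blocks are separated by a nonempty gap
    (k : ℕ → ℕ) (hk0 : k 0 = 0) (hklast : k (s + 1) = d)
    (hkmono : ∀ i ≤ s, k i < k (i + 1))
    (hblock : ∀ i ≤ s, ∀ j, k i ≤ j → j + 1 < k (i + 1) → a (j + 1) = a j + 1)
    (hgap : ∀ i < s, a (k (i + 1) - 1) + 1 < a (k (i + 1)))
    -- t = s if a_d < n, and t = s - 1 if a_d = n
    (ht : (a (d - 1) < n ∧ t = s) ∨ (a (d - 1) = n ∧ 1 ≤ s ∧ t = s - 1))
    -- gap sizes: |χ_i| for i < s, and the final gap |χ_s| = n - a_d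
    (χ : ℕ → ℤ)
    (hχ : ∀ i < s, χ i = (a (k (i + 1)) : ℤ) - (a (k (i + 1) - 1) : ℤ) - 1)
    (hχs : χ s = (n : ℤ) - (a (d - 1) : ℤ))
    -- block sizes |β_i| = k (i+1) - k i, and the numbers κ_i
    (β : ℕ → ℤ) (hβ : ∀ i, β i = (k (i + 1) : ℤ) - (k i : ℤ))
    (κ : ℕ → ℤ)
    (hκ : ∀ i, κ i = (∑ j ∈ Finset.Icc 0 i, β j) + ∑ j ∈ Finset.Icc i t, χ j)
    -- γ as an element of Γ, and its principal chain ξ_0, ..., ξ_{m-1}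
    (γ : GammaSet n d) (hγ : γ.1 = fun i : Fin d => a (i : ℕ))
    (m : ℕ) (hm : 1 ≤ m)
    (ξ : ℕ → GammaSet n d)
    (hξ0 : ξ 0 = γ)
    (hξtop : (ξ (m - 1)).1 = fun i : Fin d => n - d + 1 + (i : ℕ))
    (hξmid : ∀ i, i + 1 < m → (ξ i).1 ≠ fun j : Fin d => n - d + 1 + (j : ℕ))
    (hξstep : ∀ i, i + 1 < m → IsLUB {δ : GammaSet n d | ξ i ⋖ δ} (ξ (i + 1))) :
    (m : ℤ) = (Finset.Icc 0 t).sup' (Finset.nonempty_Icc.mpr (Nat.zero_le t)) κ := by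
  have hB : IsBlockDecomposition a k s d := ⟨hk0, hklast, hkmono, hblock, hgap⟩
  have hlen : γ.potential + 1 = m := by
    have := potential_eq_of_principalChain hdn ξ (m - 1) hξtop (fun i hi => hξmid i (by omega))
      fun i hi => hξstep i (by omega)
    rw [hξ0] at this
    omega
  rw [← hlen, Nat.cast_succ, hB.potential_add_one_eq_sup' hdn (fun j => congrFun hγ j) ht hne]
  exact sup'_congr _ rfl fun i hi => (hB.kappa_eq ht hχ hχs hβ hκ (mem_Icc.1 hi).2).symm

/-- The length `m` of the principal chain of `Γ(γ)` (starting at the minimum `γ`, each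
next element the join of all covers of the previous one, ending at the maximum
`[n-d+1,...,n]`) equals `max {Σ_{j=0}^{i}|β_j| + Σ_{j=i}^{t}|χ_j| : 0 ≤ i ≤ t}`, for the
block decomposition of `γ` into maximal runs of consecutive integers with gaps. -/
theorem stmt_17 (n d s t : ℕ) (hd : 1 ≤ d) (hdn : d ≤ n)
    -- γ is the strictly increasing tuple `a 0 < a 1 < ... < a (d-1)` (0-based indexing)
    (a : ℕ → ℕ)
    (hmono : ∀ j, j + 1 < d → a j < a (j + 1))
    (hbd : ∀ j < d, 1 ≤ a j ∧ a j ≤ n)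
    -- γ ≠ [n-d+1,...,n]
    (hne : ∃ j < d, a j ≠ n - d + 1 + j)
    -- block decomposition: block `i` (0 ≤ i ≤ s) occupies the 0-based indices
    -- `k i, k i + 1, ..., k (i+1) - 1`; its entries are consecutive integers, and
    -- consecutive blocks are separated by a nonempty gap
    (k : ℕ → ℕ) (hk0 : k 0 = 0) (hklast : k (s + 1) = d)
    (hkmono : ∀ i ≤ s, k i < k (i + 1))
    (hblock : ∀ i ≤ s, ∀ j, k i ≤ j → j + 1 < k (i + 1) → a (j + 1) = a j + 1)
    (hgap : ∀ i < s, a (k (i + 1) - 1) + 1 < a (k (i + 1)))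
    -- t = s if a_d < n, and t = s - 1 if a_d = n
    (ht : (a (d - 1) < n ∧ t = s) ∨ (a (d - 1) = n ∧ 1 ≤ s ∧ t = s - 1))
    -- gap sizes: |χ_i| for i < s, and the final gap |χ_s| = n - a_d
    (χ : ℕ → ℤ)
    (hχ : ∀ i < s, χ i = (a (k (i + 1)) : ℤ) - (a (k (i + 1) - 1) : ℤ) - 1)
    (hχs : χ s = (n : ℤ) - (a (d - 1) : ℤ))
    -- block sizes |β_i| = k (i+1) - k i, and the numbers κ_i
    (β : ℕ → ℤ) (hβ : ∀ i, β i = (k (i + 1) : ℤ) - (k i : ℤ))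
    (κ : ℕ → ℤ)
    (hκ : ∀ i, κ i = (∑ j ∈ Finset.Icc 0 i, β j) + ∑ j ∈ Finset.Icc i t, χ j)
    -- γ as an element of Γ, and its principal chain ξ_0, ..., ξ_{m-1}
    (γ : GammaSet n d) (hγ : γ.1 = fun i : Fin d => a (i : ℕ))
    (m : ℕ) (hm : 1 ≤ m)
    (ξ : ℕ → GammaSet n d)
    (hξ0 : ξ 0 = γ)
    (hξtop : (ξ (m - 1)).1 = fun i : Fin d => n - d + 1 + (i : ℕ))
    (hξmid : ∀ i, i + 1 < m → (ξ i).1 ≠ fun j : Fin d => n - d + 1 + (j : ℕ))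
    (hξstep : ∀ i, i + 1 < m → IsLUB {δ : GammaSet n d | ξ i ⋖ δ} (ξ (i + 1))) :
    (m : ℤ) = (Finset.Icc 0 t).sup' (Finset.nonempty_Icc.mpr (Nat.zero_le t)) κ :=
  stmt_17_general n d s t hdn a hne k hk0 hklast hkmono hblock hgap ht χ hχ hχs β hβ κ hκ γ hγ m hm
    ξ hξ0 hξtop hξmid hξstep
end
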